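/- No free lunch theorem for security and utility: under the stated assumptions, C_1 ≤ ε_p + C_2·ε_u, where C_1 = (1/K)·Σ_{k=1}^K √JS(f^O_k ‖ f_{B,k}), ε_p = (1/K)·Σ_{k=1}^K √JS(f^A_k ‖ f_{B,k}) is the average Bayesian privacy leakage, ε_u = ∫ U_a dP^O_a − ∫ U_a dP^S_a is the utility loss, and C_2 = γ·(e^{2ξ} − 1)/Δ with γ = ((1/K)·Σ_{k=1}^K TV(P^O_k ‖ P^S_k)) / TV(P^O_a ‖ P^S_a). In particular, the sum of the privacy leakage and a constant multiple of the utility loss is bounded below by the problem-dependent constant C_1. -/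

import Mathlib

open MeasureTheory

/-- Jensen–Shannon divergence between two probability densities `p, q` on `(𝒟, μ)`:
`JS(p ‖ q) = (1/2)∫ p·log(p/m) dμ + (1/2)∫ q·log(q/m) dμ` with `m = (p+q)/2`. -/
noncomputable def JSdiv {α : Type*} [MeasurableSpace α] (μ : Measure α) (p q : α → ℝ) : ℝ :=
  (1 / 2) * ∫ d, p d * Real.log (p d / ((p d + q d) / 2)) ∂μ
    + (1 / 2) * ∫ d, q d * Real.log (q d / ((p d + q d) / 2)) ∂μ

/-- Total variation distance between two measures:
`TV(P ‖ Q) = sup_{A measurable} |P(A) − Q(A)|`. -/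
noncomputable def TV {α : Type*} [MeasurableSpace α] (P Q : Measure α) : ℝ :=
  ⨆ A : { A : Set α // MeasurableSet A }, |(P A).toReal - (Q A).toReal|

open Set ENNReal

set_option maxHeartbeats 1000000

section AuxNFL

noncomputable def psi (x : ℝ) : ℝ :=
  (x * Real.log (2 * x / (1 + x)) + Real.log (2 / (1 + x))) / 2

noncomputable def psiD (x : ℝ) : ℝ := Real.log (2 * x / (1 + x)) / 2

lemma psi_one : psi 1 = 0 := by norm_num [psi]

lemma psiD_one : psiD 1 = 0 := by norm_num [psiD]

lemma hasDerivAt_L {x : ℝ} (hx : 0 < x) :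
    HasDerivAt (fun y => Real.log (2 * y / (1 + y))) (1 / (x * (1 + x))) x := by
  have h1x : (0:ℝ) < 1 + x := by linarith
  have hinner : HasDerivAt (fun y : ℝ => 2 * y / (1 + y))
      ((2 * (1 + x) - 2 * x * 1) / (1 + x) ^ 2) x := by
    exact (((hasDerivAt_id x).const_mul 2).div ((hasDerivAt_id x).const_add 1) (by positivity)).congr_deriv (by simp only [id_eq, mul_one])
  have hne : 2 * x / (1 + x) ≠ 0 := by positivity
  have := hinner.log hne
  convert this using 1
  field_simp
  ring

lemma hasDerivAt_psi {x : ℝ} (hx : 0 < x) : HasDerivAt psi (psiD x) x := by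
  have h1x : (0:ℝ) < 1 + x := by linarith
  have hL := hasDerivAt_L hx
  have h1 : HasDerivAt (fun y : ℝ => y * Real.log (2 * y / (1 + y)))
      (Real.log (2 * x / (1 + x)) + x * (1 / (x * (1 + x)))) x := by
    exact ((hasDerivAt_id x).mul hL).congr_deriv (by simp only [id_eq, one_mul])
  have h2 : HasDerivAt (fun y : ℝ => Real.log (2 / (1 + y))) (-(1 / (1 + x))) x := by
    have hinner : HasDerivAt (fun y : ℝ => 2 / (1 + y)) (-(2 / (1 + x) ^ 2)) x := by
      have := (hasDerivAt_const x (2:ℝ)).div ((hasDerivAt_id x).const_add 1) (by positivity : (1:ℝ)+x ≠ 0)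
      exact this.congr_deriv (by simp only [id_eq]; ring)
    have hne : 2 / (1 + x) ≠ 0 := by positivity
    have := hinner.log hne
    convert this using 1
    field_simp
  have := (h1.add h2).div_const 2
  exact this.congr_deriv (by unfold psiD; field_simp; ring)

lemma hasDerivAt_psiD {x : ℝ} (hx : 0 < x) :
    HasDerivAt psiD (1 / (2 * (x * (1 + x)))) x := by
  have := (hasDerivAt_L hx).div_const 2
  exact this.congr_deriv (by rw [div_div]; ring_nf)

lemma psiD_nonneg {x : ℝ} (hx : 1 ≤ x) : 0 ≤ psiD x := by
  have h1x : (0:ℝ) < 1 + x := by linarith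
  have : (1:ℝ) ≤ 2 * x / (1 + x) := by rw [le_div_iff₀ h1x]; linarith
  have := Real.log_nonneg this
  unfold psiD; linarith

lemma psiD_nonpos {x : ℝ} (hx0 : 0 < x) (hx : x ≤ 1) : psiD x ≤ 0 := by
  have h1x : (0:ℝ) < 1 + x := by linarith
  have harg : 2 * x / (1 + x) ≤ 1 := by rw [div_le_one h1x]; linarith
  have harg0 : 0 < 2 * x / (1 + x) := by positivity
  have := Real.log_nonpos (le_of_lt harg0) harg
  unfold psiD; linarith

lemma psiD_pos {x : ℝ} (hx : 1 < x) : 0 < psiD x := by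
  have h1x : (0:ℝ) < 1 + x := by linarith
  have : (1:ℝ) < 2 * x / (1 + x) := by rw [lt_div_iff₀ h1x]; linarith
  have := Real.log_pos this
  unfold psiD; linarith

lemma psiD_neg {x : ℝ} (hx0 : 0 < x) (hx : x < 1) : psiD x < 0 := by
  have h1x : (0:ℝ) < 1 + x := by linarith
  have harg : 2 * x / (1 + x) < 1 := by rw [div_lt_one h1x]; linarith
  have harg0 : 0 < 2 * x / (1 + x) := by positivity
  have := Real.log_neg harg0 harg
  unfold psiD; linarith

lemma psi_contOn {s : Set ℝ} (hs : ∀ x ∈ s, 0 < x) : ContinuousOn psi s := by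
  intro x hx
  exact ((hasDerivAt_psi (hs x hx)).continuousAt).continuousWithinAt

lemma psi_monoOn : MonotoneOn psi (Ici (1:ℝ)) := by
  apply monotoneOn_of_deriv_nonneg (convex_Ici 1) (psi_contOn (fun x hx => by
    simp only [mem_Ici] at hx; linarith))
  · intro x hx
    rw [interior_Ici] at hx
    exact (hasDerivAt_psi (by simp only [mem_Ioi] at hx; linarith)).differentiableAt.differentiableWithinAt
  · intro x hx
    rw [interior_Ici] at hx
    simp only [mem_Ioi] at hx
    rw [(hasDerivAt_psi (by linarith : (0:ℝ) < x)).deriv]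
    exact psiD_nonneg hx.le

lemma psi_antiOn : AntitoneOn psi (Ioc (0:ℝ) 1) := by
  apply antitoneOn_of_deriv_nonpos (convex_Ioc 0 1) (psi_contOn (fun x hx => hx.1))
  · intro x hx
    rw [interior_Ioc] at hx
    exact (hasDerivAt_psi hx.1).differentiableAt.differentiableWithinAt
  · intro x hx
    rw [interior_Ioc] at hx
    rw [(hasDerivAt_psi hx.1).deriv]
    exact psiD_nonpos hx.1 hx.2.le

lemma psi_nonneg {x : ℝ} (hx : 0 < x) : 0 ≤ psi x := by
  rcases le_or_gt x 1 with h | h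
  · have := psi_antiOn (mem_Ioc.2 ⟨hx, h⟩) (mem_Ioc.2 ⟨one_pos, le_refl 1⟩) h
    rw [psi_one] at this; linarith
  · have := psi_monoOn (mem_Ici.2 (le_refl 1)) (mem_Ici.2 h.le) h.le
    rw [psi_one] at this; linarith

lemma psi_pos_of_gt {x : ℝ} (hx : 1 < x) : 0 < psi x := by
  rw [← psi_one]
  apply strictMonoOn_of_deriv_pos (convex_Ici 1) (psi_contOn (fun y hy => by
    simp only [mem_Ici] at hy; linarith)) ?_ (mem_Ici.2 (le_refl 1)) (mem_Ici.2 hx.le) hx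
  intro y hy
  rw [interior_Ici] at hy
  simp only [mem_Ioi] at hy
  rw [(hasDerivAt_psi (by linarith : (0:ℝ) < y)).deriv]
  exact psiD_pos hy

lemma psi_pos_of_lt {x : ℝ} (hx0 : 0 < x) (hx : x < 1) : 0 < psi x := by
  rw [← psi_one]
  apply strictAntiOn_of_deriv_neg (convex_Ioc 0 1) (psi_contOn (fun y hy => hy.1)) ?_
    (mem_Ioc.2 ⟨hx0, hx.le⟩) (mem_Ioc.2 ⟨one_pos, le_refl 1⟩) hx
  intro y hy
  rw [interior_Ioc] at hy
  rw [(hasDerivAt_psi hy.1).deriv]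
  exact psiD_neg hy.1 hy.2

lemma sign_of_deriv {a : ℝ} (ha : 0 < a) (ha1 : a ≤ 1) (G G' : ℝ → ℝ)
    (hG : ∀ x, 0 < x → HasDerivAt G (G' x) x) (hG1 : G 1 = 0)
    (hpos : ∀ x, a ≤ x → 0 ≤ G' x) : ∀ x, a ≤ x → 0 ≤ G x * (x - 1) := by
  have hmono : MonotoneOn G (Ici a) := by
    apply monotoneOn_of_deriv_nonneg (convex_Ici a)
    · intro x hx; exact (hG x (lt_of_lt_of_le ha hx)).continuousAt.continuousWithinAt
    · intro x hx
      rw [interior_Ici] at hx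
      exact (hG x (lt_trans ha hx)).differentiableAt.differentiableWithinAt
    · intro x hx
      rw [interior_Ici] at hx
      rw [(hG x (lt_trans ha hx)).deriv]
      exact hpos x (le_of_lt hx)
  intro x hx
  rcases le_or_gt 1 x with h | h
  · have := hmono (mem_Ici.2 ha1) (mem_Ici.2 hx) h
    rw [hG1] at this
    nlinarith
  · have := hmono (mem_Ici.2 hx) (mem_Ici.2 ha1) h.le
    rw [hG1] at this
    nlinarith

lemma nonneg_of_deriv {a : ℝ} (ha : 0 < a) (ha1 : a ≤ 1) (F F' : ℝ → ℝ)
    (hF : ∀ x, 0 < x → HasDerivAt F (F' x) x) (hF1 : F 1 = 0)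
    (hsign : ∀ x, a ≤ x → 0 ≤ F' x * (x - 1)) : ∀ x, a ≤ x → 0 ≤ F x := by
  intro x hx
  rcases le_or_gt 1 x with h | h
  · have hmono : MonotoneOn F (Ici (1:ℝ)) := by
      apply monotoneOn_of_deriv_nonneg (convex_Ici 1)
      · intro y hy; exact (hF y (by simp only [mem_Ici] at hy; linarith)).continuousAt.continuousWithinAt
      · intro y hy
        rw [interior_Ici] at hy
        simp only [mem_Ioi] at hy
        exact (hF y (by linarith)).differentiableAt.differentiableWithinAt
      · intro y hy
        rw [interior_Ici] at hy
        simp only [mem_Ioi] at hy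
        rw [(hF y (by linarith)).deriv]
        have := hsign y (by linarith)
        nlinarith
    have := hmono (mem_Ici.2 (le_refl 1)) (mem_Ici.2 h) h
    rw [hF1] at this; exact this
  · have hanti : AntitoneOn F (Icc a 1) := by
      apply antitoneOn_of_deriv_nonpos (convex_Icc a 1)
      · intro y hy; exact (hF y (lt_of_lt_of_le ha hy.1)).continuousAt.continuousWithinAt
      · intro y hy
        rw [interior_Icc] at hy
        exact (hF y (lt_trans ha hy.1)).differentiableAt.differentiableWithinAt
      · intro y hy
        rw [interior_Icc] at hy
        rw [(hF y (lt_trans ha hy.1)).deriv]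
        have := hsign y hy.1.le
        nlinarith [hy.2]
    have := hanti (mem_Icc.2 ⟨hx, h.le⟩) (mem_Icc.2 ⟨ha1, le_refl 1⟩) h.le
    rw [hF1] at this; exact this

lemma curv_bound {a c x : ℝ} (ha : 0 < a) (hc : 1 / (2 * (a * (1 + a))) ≤ 2 * c ^ 2)
    (hx : a ≤ x) : 1 / (2 * (x * (1 + x))) ≤ 2 * c ^ 2 := by
  refine le_trans ?_ hc
  apply one_div_le_one_div_of_le (by positivity)
  nlinarith

lemma psiD_sq_le {a c x : ℝ} (ha : 0 < a) (ha1 : a ≤ 1)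
    (hc : 1 / (2 * (a * (1 + a))) ≤ 2 * c ^ 2) (hx : a ≤ x) :
    psiD x ^ 2 ≤ (2 * c) ^ 2 * psi x := by
  have key := nonneg_of_deriv ha ha1 (fun y => (2 * c) ^ 2 * psi y - psiD y ^ 2)
    (fun y => (2 * c) ^ 2 * psiD y - 2 * psiD y * (1 / (2 * (y * (1 + y)))))
    (fun y hy => by
      have h1 := (hasDerivAt_psi hy).const_mul ((2 * c) ^ 2)
      have h2 := (hasDerivAt_psiD hy).pow 2
      have := h1.sub h2
      exact this.congr_deriv (by ring))
    (by simp [psi_one, psiD_one])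
    (fun y hy => by
      have h1 : 0 ≤ psiD y * (y - 1) := by
        rcases le_or_gt 1 y with h | h
        · have := psiD_nonneg h; nlinarith
        · have := psiD_nonpos (lt_of_lt_of_le ha hy) h.le; nlinarith
      have h2 := curv_bound ha hc hy
      nlinarith)
    x hx
  have key' : 0 ≤ (2 * c) ^ 2 * psi x - psiD x ^ 2 := key
  linarith

lemma psi_le_sq {a c x : ℝ} (ha : 0 < a) (ha1 : a ≤ 1)
    (hc : 1 / (2 * (a * (1 + a))) ≤ 2 * c ^ 2) (hx : a ≤ x) :
    psi x ≤ c ^ 2 * (x - 1) ^ 2 := by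
  have hG := sign_of_deriv ha ha1 (fun y => c ^ 2 * (2 * (y - 1)) - psiD y)
    (fun y => c ^ 2 * 2 - 1 / (2 * (y * (1 + y))))
    (fun y hy => by
      have h1 : HasDerivAt (fun y : ℝ => c ^ 2 * (2 * (y - 1))) (c ^ 2 * 2) y := by
        simpa using (((hasDerivAt_id y).sub_const 1).const_mul 2).const_mul (c ^ 2)
      have := h1.sub (hasDerivAt_psiD hy)
      exact this)
    (by simp [psiD_one])
    (fun y hy => by
      have := curv_bound ha hc hy
      nlinarith)
  have key := nonneg_of_deriv ha ha1 (fun y => c ^ 2 * (y - 1) ^ 2 - psi y)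
    (fun y => c ^ 2 * (2 * (y - 1)) - psiD y)
    (fun y hy => by
      have h1 : HasDerivAt (fun y : ℝ => c ^ 2 * (y - 1) ^ 2) (c ^ 2 * (2 * (y - 1))) y := by
        have := (((hasDerivAt_id y).sub_const 1).pow 2).const_mul (c ^ 2)
        exact this.congr_deriv (by simp only [id_eq]; ring)
      exact h1.sub (hasDerivAt_psi hy))
    (by simp [psi_one])
    hG
    x hx
  have key' : 0 ≤ c ^ 2 * (x - 1) ^ 2 - psi x := key
  linarith

lemma abs_psiD_le {a c x : ℝ} (ha : 0 < a) (ha1 : a ≤ 1) (hc0 : 0 < c)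
    (hc : 1 / (2 * (a * (1 + a))) ≤ 2 * c ^ 2) (hx : a ≤ x) :
    |psiD x| ≤ 2 * c * Real.sqrt (psi x) := by
  have h := psiD_sq_le ha ha1 hc hx
  have hps := psi_nonneg (lt_of_lt_of_le ha hx)
  have : |psiD x| = Real.sqrt (psiD x ^ 2) := (Real.sqrt_sq_eq_abs _).symm
  rw [this]
  calc Real.sqrt (psiD x ^ 2) ≤ Real.sqrt ((2 * c) ^ 2 * psi x) := Real.sqrt_le_sqrt h
    _ = 2 * c * Real.sqrt (psi x) := by
        rw [Real.sqrt_mul (by positivity), Real.sqrt_sq (by positivity)]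

lemma sqrt_psi_le {a c x : ℝ} (ha : 0 < a) (ha1 : a ≤ 1) (hc0 : 0 < c)
    (hc : 1 / (2 * (a * (1 + a))) ≤ 2 * c ^ 2) (hx : a ≤ x) :
    Real.sqrt (psi x) ≤ c * |x - 1| := by
  have h := psi_le_sq ha ha1 hc hx
  calc Real.sqrt (psi x) ≤ Real.sqrt (c ^ 2 * (x - 1) ^ 2) := Real.sqrt_le_sqrt h
    _ = c * |x - 1| := by
        rw [Real.sqrt_mul (by positivity), Real.sqrt_sq (by positivity), Real.sqrt_sq_eq_abs]

lemma sqrt_psi_MVT {a c u v : ℝ} (ha : 0 < a) (ha1 : a ≤ 1) (hc0 : 0 < c)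
    (hc : 1 / (2 * (a * (1 + a))) ≤ 2 * c ^ 2) (hu : a ≤ u) (huv : u ≤ v)
    (hpos : ∀ x ∈ Icc u v, 0 < psi x) :
    |Real.sqrt (psi v) - Real.sqrt (psi u)| ≤ c * (v - u) := by
  have key := norm_image_sub_le_of_norm_deriv_le_segment'
    (f := fun x => Real.sqrt (psi x))
    (f' := fun x => 1 / (2 * Real.sqrt (psi x)) * psiD x) (a := u) (b := v) (C := c)
    (fun x hx => by
      have hx0 : 0 < x := lt_of_lt_of_le ha (le_trans hu hx.1)
      have hpsix := hpos x hx
      have hs := Real.hasDerivAt_sqrt (ne_of_gt hpsix)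
      exact ((hs.comp x (hasDerivAt_psi hx0))).hasDerivWithinAt)
    (fun x hx => by
      have hx0 : 0 < x := lt_of_lt_of_le ha (le_trans hu hx.1)
      have hpsix := hpos x ⟨hx.1, le_of_lt hx.2⟩
      have habs := abs_psiD_le ha ha1 hc0 hc (le_trans hu hx.1)
      have hsq : 0 < Real.sqrt (psi x) := Real.sqrt_pos.2 hpsix
      rw [Real.norm_eq_abs, abs_mul, abs_div, abs_of_pos (by positivity : (0:ℝ) < 2 * Real.sqrt (psi x))]
      rw [abs_one]
      rw [div_mul_eq_mul_div, one_mul, div_le_iff₀ (by positivity)]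
      calc |psiD x| ≤ 2 * c * Real.sqrt (psi x) := habs
        _ = c * (2 * Real.sqrt (psi x)) := by ring)
    v (mem_Icc.2 ⟨huv, le_refl v⟩)
  simpa using key

lemma sqrt_psi_lip {a c x y : ℝ} (ha : 0 < a) (ha1 : a ≤ 1) (hc0 : 0 < c)
    (hc : 1 / (2 * (a * (1 + a))) ≤ 2 * c ^ 2) (hx : a ≤ x) (hy : a ≤ y) :
    Real.sqrt (psi x) ≤ Real.sqrt (psi y) + c * |x - y| := by
  have hx0 : 0 < x := lt_of_lt_of_le ha hx
  have hy0 : 0 < y := lt_of_lt_of_le ha hy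
  have hsy : 0 ≤ Real.sqrt (psi y) := Real.sqrt_nonneg _
  rcases le_or_gt x 1 with hx1 | hx1 <;> rcases le_or_gt y 1 with hy1 | hy1
  · -- both ≤ 1
    rcases eq_or_lt_of_le hx1 with hxe | hxlt
    · rw [hxe, psi_one, Real.sqrt_zero]
      positivity
    rcases eq_or_lt_of_le hy1 with hye | hylt
    · have := sqrt_psi_le ha ha1 hc0 hc hx
      rw [hye, psi_one, Real.sqrt_zero]
      calc Real.sqrt (psi x) ≤ c * |x - 1| := this
        _ = 0 + c * |x - 1| := by ring
    · -- both < 1 : MVT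
      have hpos : ∀ z ∈ Icc (min x y) (max x y), 0 < psi z := by
        intro z hz
        have hz0 : 0 < z := lt_of_lt_of_le ha (le_trans (le_min hx hy) hz.1)
        have hz1 : z < 1 := lt_of_le_of_lt hz.2 (max_lt hxlt hylt)
        exact psi_pos_of_lt hz0 hz1
      rcases le_total x y with hxy | hxy
      · have := sqrt_psi_MVT ha ha1 hc0 hc hx hxy (by
          simpa [min_eq_left hxy, max_eq_right hxy] using hpos)
        have habs : |x - y| = y - x := by rw [abs_sub_comm]; exact abs_of_nonneg (by linarith)
        rw [habs]
        cases abs_le.1 this with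
        | intro h1 h2 => linarith
      · have := sqrt_psi_MVT ha ha1 hc0 hc hy hxy (by
          simpa [min_eq_right hxy, max_eq_left hxy] using hpos)
        have habs : |x - y| = x - y := abs_of_nonneg (by linarith)
        rw [habs]
        cases abs_le.1 this with
        | intro h1 h2 => linarith
  · -- x ≤ 1 < y
    have h1 := sqrt_psi_le ha ha1 hc0 hc hx
    have h2 : |x - 1| ≤ |x - y| := by
      rw [abs_of_nonpos (by linarith), abs_of_nonpos (by linarith)]
      linarith
    nlinarith [abs_nonneg (x - y)]
  · -- y ≤ 1 < x
    have h1 := sqrt_psi_le ha ha1 hc0 hc hx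
    have h2 : |x - 1| ≤ |x - y| := by
      rw [abs_of_nonneg (by linarith), abs_of_nonneg (by linarith)]
      linarith
    nlinarith [abs_nonneg (x - y)]
  · -- both > 1 : MVT
    have hpos : ∀ z ∈ Icc (min x y) (max x y), 0 < psi z := by
      intro z hz
      have hz1 : 1 < z := lt_of_lt_of_le (lt_min hx1 hy1) hz.1
      exact psi_pos_of_gt hz1
    rcases le_total x y with hxy | hxy
    · have := sqrt_psi_MVT ha ha1 hc0 hc hx hxy (by
        simpa [min_eq_left hxy, max_eq_right hxy] using hpos)
      have habs : |x - y| = y - x := by rw [abs_sub_comm]; exact abs_of_nonneg (by linarith)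
      rw [habs]
      cases abs_le.1 this with
      | intro h1 h2 => linarith
    · have := sqrt_psi_MVT ha ha1 hc0 hc hy hxy (by
        simpa [min_eq_right hxy, max_eq_left hxy] using hpos)
      have habs : |x - y| = x - y := abs_of_nonneg (by linarith)
      rw [habs]
      cases abs_le.1 this with
      | intro h1 h2 => linarith
section TVfacts

variable {α : Type*} [MeasurableSpace α] (P Q : Measure α)
  [IsProbabilityMeasure P] [IsProbabilityMeasure Q]

lemma prob_toReal_le_one (A : Set α) : (P A).toReal ≤ 1 := by
  have h : P A ≤ 1 := prob_le_one
  calc (P A).toReal ≤ (1 : ℝ≥0∞).toReal := ENNReal.toReal_mono (by simp) h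
    _ = 1 := by simp

lemma TV_bddAbove : BddAbove (Set.range fun A : { A : Set α // MeasurableSet A } =>
    |(P A).toReal - (Q A).toReal|) := by
  refine ⟨1, ?_⟩
  rintro x ⟨A, rfl⟩
  rw [abs_sub_le_iff]
  constructor
  · have h1 := prob_toReal_le_one P (A : Set α)
    have h2 : 0 ≤ (Q (A : Set α)).toReal := ENNReal.toReal_nonneg
    linarith
  · have h1 := prob_toReal_le_one Q (A : Set α)
    have h2 : 0 ≤ (P (A : Set α)).toReal := ENNReal.toReal_nonneg
    linarith

lemma abs_sub_le_TV {A : Set α} (hA : MeasurableSet A) :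
    |(P A).toReal - (Q A).toReal| ≤ TV P Q :=
  le_ciSup (TV_bddAbove P Q) (⟨A, hA⟩ : { A : Set α // MeasurableSet A })

lemma TV_nonneg : 0 ≤ TV P Q := by
  have := abs_sub_le_TV P Q MeasurableSet.empty
  simpa using le_trans (abs_nonneg _) this

lemma TV_le_one : TV P Q ≤ 1 := by
  apply ciSup_le
  rintro ⟨A, hA⟩
  rw [abs_sub_le_iff]
  constructor
  · have h1 := prob_toReal_le_one P A
    have h2 : 0 ≤ (Q A).toReal := ENNReal.toReal_nonneg
    linarith
  · have h1 := prob_toReal_le_one Q A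
    have h2 : 0 ≤ (P A).toReal := ENNReal.toReal_nonneg
    linarith

lemma TV_symm : TV P Q = TV Q P := by
  unfold TV
  congr 1
  funext A
  rw [abs_sub_comm]

variable {g : α → ℝ} {M : ℝ}

lemma integral_sub_le_TV (hg : Measurable g) (hg0 : ∀ w, 0 ≤ g w) (hgM : ∀ w, g w ≤ M) :
    ∫ w, g w ∂P - ∫ w, g w ∂Q ≤ M * TV P Q := by
  rcases isEmpty_or_nonempty α with hα | hα
  · exfalso
    have h1 : P (univ : Set α) = 1 := measure_univ
    have h2 : (univ : Set α) = ∅ := by simp [eq_empty_iff_forall_notMem]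
    rw [h2, measure_empty] at h1
    exact zero_ne_one h1
  have hM0 : 0 ≤ M := le_trans (hg0 (Classical.arbitrary α)) (hgM _)
  have hTV0 := TV_nonneg P Q
  -- lintegral representation
  have hPrep : ∫ w, g w ∂P = (∫⁻ w, ENNReal.ofReal (g w) ∂P).toReal :=
    integral_eq_lintegral_of_nonneg_ae (Filter.Eventually.of_forall hg0)
      hg.aestronglyMeasurable
  have hQrep : ∫ w, g w ∂Q = (∫⁻ w, ENNReal.ofReal (g w) ∂Q).toReal :=
    integral_eq_lintegral_of_nonneg_ae (Filter.Eventually.of_forall hg0)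
      hg.aestronglyMeasurable
  have hPlay := lintegral_eq_lintegral_meas_lt P (Filter.Eventually.of_forall hg0)
    hg.aemeasurable
  have hQlay := lintegral_eq_lintegral_meas_lt Q (Filter.Eventually.of_forall hg0)
    hg.aemeasurable
  -- pointwise bound on tail measures
  have hpt : ∀ t ∈ Ioi (0:ℝ), P {a | t < g a} ≤ Q {a | t < g a}
      + (Ioc (0:ℝ) M).indicator (fun _ => ENNReal.ofReal (TV P Q)) t := by
    intro t ht
    simp only [mem_Ioi] at ht
    rcases le_or_gt M t with hMt | htM
    · have hempty : {a | t < g a} = ∅ := by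
        ext a
        simp only [mem_setOf_eq, mem_empty_iff_false, iff_false, not_lt]
        exact le_trans (hgM a) hMt
      rw [hempty, measure_empty]
      exact zero_le
    · have hmem : t ∈ Ioc (0:ℝ) M := ⟨ht, htM.le⟩
      rw [indicator_of_mem hmem]
      have hA : MeasurableSet {a | t < g a} := measurableSet_lt measurable_const hg
      have habs := abs_sub_le_TV P Q hA
      have hle : (P {a | t < g a}).toReal ≤ (Q {a | t < g a}).toReal + TV P Q := by
        have := abs_le.1 habs
        linarith [this.2]
      calc P {a | t < g a} = ENNReal.ofReal ((P {a | t < g a}).toReal) := by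
            rw [ENNReal.ofReal_toReal (measure_ne_top P _)]
        _ ≤ ENNReal.ofReal ((Q {a | t < g a}).toReal + TV P Q) := ENNReal.ofReal_le_ofReal hle
        _ = ENNReal.ofReal ((Q {a | t < g a}).toReal) + ENNReal.ofReal (TV P Q) :=
            ENNReal.ofReal_add ENNReal.toReal_nonneg hTV0
        _ = Q {a | t < g a} + ENNReal.ofReal (TV P Q) := by
            rw [ENNReal.ofReal_toReal (measure_ne_top Q _)]
  -- integrate the pointwise bound
  have hkey : ∫⁻ w, ENNReal.ofReal (g w) ∂P
      ≤ ∫⁻ w, ENNReal.ofReal (g w) ∂Q + ENNReal.ofReal (M * TV P Q) := by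
    rw [hPlay, hQlay]
    have h1 : ∫⁻ t in Ioi (0:ℝ), P {a | t < g a}
        ≤ ∫⁻ t in Ioi (0:ℝ), (Q {a | t < g a}
          + (Ioc (0:ℝ) M).indicator (fun _ => ENNReal.ofReal (TV P Q)) t) := by
      apply setLIntegral_mono_ae ?_ (Filter.Eventually.of_forall hpt)
      apply Measurable.aemeasurable
      apply Measurable.add
      · apply Antitone.measurable
        intro s t hst
        apply measure_mono
        intro a ha
        exact lt_of_le_of_lt hst ha
      · exact Measurable.indicator measurable_const measurableSet_Ioc
    have h2 : ∫⁻ t in Ioi (0:ℝ), (Q {a | t < g a}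
          + (Ioc (0:ℝ) M).indicator (fun _ => ENNReal.ofReal (TV P Q)) t)
        = (∫⁻ t in Ioi (0:ℝ), Q {a | t < g a}) + ENNReal.ofReal (M * TV P Q) := by
      rw [lintegral_add_right _ (Measurable.indicator measurable_const measurableSet_Ioc)]
      congr 1
      rw [lintegral_indicator measurableSet_Ioc]
      rw [setLIntegral_const]
      rw [Measure.restrict_apply measurableSet_Ioc]
      have : Ioc (0:ℝ) M ∩ Ioi (0:ℝ) = Ioc (0:ℝ) M := by
        apply inter_eq_self_of_subset_left
        exact Ioc_subset_Ioi_self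
      rw [this, Real.volume_Ioc]
      rw [← ENNReal.ofReal_mul hTV0, sub_zero]
      rw [mul_comm]
    exact le_trans h1 (le_of_eq h2)
  -- convert back to real integrals
  have hPfin : ∫⁻ w, ENNReal.ofReal (g w) ∂P ≠ ⊤ := by
    apply ne_of_lt
    calc ∫⁻ w, ENNReal.ofReal (g w) ∂P ≤ ∫⁻ _, ENNReal.ofReal M ∂P := by
          apply lintegral_mono
          intro w
          exact ENNReal.ofReal_le_ofReal (hgM w)
      _ = ENNReal.ofReal M := by simp
      _ < ⊤ := ENNReal.ofReal_lt_top
  have hQfin : ∫⁻ w, ENNReal.ofReal (g w) ∂Q ≠ ⊤ := by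
    apply ne_of_lt
    calc ∫⁻ w, ENNReal.ofReal (g w) ∂Q ≤ ∫⁻ _, ENNReal.ofReal M ∂Q := by
          apply lintegral_mono
          intro w
          exact ENNReal.ofReal_le_ofReal (hgM w)
      _ = ENNReal.ofReal M := by simp
      _ < ⊤ := ENNReal.ofReal_lt_top
  rw [hPrep, hQrep]
  have := ENNReal.toReal_mono (by
      apply ENNReal.add_ne_top.2
      exact ⟨hQfin, ENNReal.ofReal_ne_top⟩) hkey
  rw [ENNReal.toReal_add hQfin ENNReal.ofReal_ne_top,
    ENNReal.toReal_ofReal (by positivity)] at this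
  linarith

lemma abs_integral_sub_le_TV (hg : Measurable g) (hg0 : ∀ w, 0 ≤ g w) (hgM : ∀ w, g w ≤ M) :
    |∫ w, g w ∂P - ∫ w, g w ∂Q| ≤ M * TV P Q := by
  rw [abs_sub_le_iff]
  refine ⟨integral_sub_le_TV P Q hg hg0 hgM, ?_⟩
  rw [TV_symm]
  exact integral_sub_le_TV Q P hg hg0 hgM

end TVfacts

section Client

variable {D W : Type*} [MeasurableSpace D] [MeasurableSpace W]

lemma log_first_bound {a b x : ℝ} (ha : 0 < a) (ha1 : a ≤ 1) (hb : 1 ≤ b)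
    (hax : a ≤ x) (hxb : x ≤ b) : |Real.log (2 * x / (1 + x))| ≤ 1 - Real.log a := by
  have hx0 : 0 < x := lt_of_lt_of_le ha hax
  have h1x : (0:ℝ) < 1 + x := by linarith
  have hlow : a ≤ 2 * x / (1 + x) := by
    rw [le_div_iff₀ h1x]
    nlinarith
  have hup : 2 * x / (1 + x) ≤ 2 := by
    rw [div_le_iff₀ h1x]
    linarith
  have hla : Real.log a ≤ Real.log (2 * x / (1 + x)) := Real.log_le_log ha hlow
  have hl2 : Real.log (2 * x / (1 + x)) ≤ 1 := by
    calc Real.log (2 * x / (1 + x)) ≤ Real.log 2 := Real.log_le_log (by positivity) hup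
      _ ≤ 2 - 1 := Real.log_le_sub_one_of_pos (by norm_num)
      _ = 1 := by norm_num
  have hla0 : Real.log a ≤ 0 := Real.log_nonpos ha.le ha1
  rw [abs_le]
  constructor <;> linarith

lemma log_second_bound {a b x : ℝ} (ha : 0 < a) (ha1 : a ≤ 1) (hb : 1 ≤ b)
    (hax : a ≤ x) (hxb : x ≤ b) : |Real.log (2 / (1 + x))| ≤ 1 + Real.log b := by
  have hx0 : 0 < x := lt_of_lt_of_le ha hax
  have h1x : (0:ℝ) < 1 + x := by linarith
  have hb0 : (0:ℝ) < b := by linarith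
  have hlow : 1 / b ≤ 2 / (1 + x) := by
    rw [div_le_div_iff₀ hb0 h1x]
    nlinarith
  have hup : 2 / (1 + x) ≤ 2 := by
    rw [div_le_iff₀ h1x]
    nlinarith
  have hla : Real.log (1 / b) ≤ Real.log (2 / (1 + x)) := Real.log_le_log (by positivity) hlow
  rw [Real.log_div one_ne_zero (ne_of_gt hb0), Real.log_one] at hla
  have hl2 : Real.log (2 / (1 + x)) ≤ 1 := by
    calc Real.log (2 / (1 + x)) ≤ Real.log 2 := Real.log_le_log (by positivity) hup
      _ ≤ 2 - 1 := Real.log_le_sub_one_of_pos (by norm_num)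
      _ = 1 := by norm_num
  have hlb0 : 0 ≤ Real.log b := Real.log_nonneg hb
  rw [abs_le]
  constructor <;> linarith

lemma JSdiv_eq_psi (μ : Measure D) (p r : D → ℝ) (hp_meas : Measurable p)
    (hr_meas : Measurable r) (hr_pos : ∀ d, 0 < r d) (hr_int : Integrable r μ)
    {a b : ℝ} (ha : 0 < a) (ha1 : a ≤ 1) (hb : 1 ≤ b)
    (hpl : ∀ d, r d * a ≤ p d) (hpu : ∀ d, p d ≤ r d * b) :
    JSdiv μ p r = ∫ d, r d * psi (p d / r d) ∂μ := by
  have hbnd : ∀ d, a ≤ p d / r d ∧ p d / r d ≤ b := by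
    intro d
    constructor
    · rw [le_div_iff₀ (hr_pos d)]
      nlinarith [hpl d, hr_pos d]
    · rw [div_le_iff₀ (hr_pos d)]
      nlinarith [hpu d, hr_pos d]
  have hx_meas : Measurable fun d => p d / r d := hp_meas.div hr_meas
  have hppos : ∀ d, 0 < p d := fun d => lt_of_lt_of_le (by nlinarith [hr_pos d]) (hpl d)
  -- pointwise identities
  have hA : ∀ d, p d * Real.log (p d / ((p d + r d) / 2))
      = r d * ((p d / r d) * Real.log (2 * (p d / r d) / (1 + p d / r d))) := by
    intro d
    have hrd := hr_pos d
    have hpd := hppos d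
    have hsum : p d + r d ≠ 0 := by positivity
    have harg : p d / ((p d + r d) / 2) = 2 * (p d / r d) / (1 + p d / r d) := by
      rw [div_eq_div_iff (by positivity) (by positivity)]
      field_simp
      ring
    rw [harg]
    field_simp
  have hB : ∀ d, r d * Real.log (r d / ((p d + r d) / 2))
      = r d * Real.log (2 / (1 + p d / r d)) := by
    intro d
    have hrd := hr_pos d
    have hpd := hppos d
    congr 2
    rw [div_eq_div_iff (by positivity) (by positivity)]
    field_simp
    ring
  -- integrability
  have hF_meas : Measurable fun d => r d * ((p d / r d) * Real.log (2 * (p d / r d) / (1 + p d / r d))) := by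
    apply hr_meas.mul
    apply hx_meas.mul
    apply Measurable.log
    exact ((hx_meas.const_mul 2).div (hx_meas.const_add 1))
  have hG_meas : Measurable fun d => r d * Real.log (2 / (1 + p d / r d)) := by
    apply hr_meas.mul
    apply Measurable.log
    exact (measurable_const.div (hx_meas.const_add 1))
  have hF_int : Integrable (fun d => r d * ((p d / r d) * Real.log (2 * (p d / r d) / (1 + p d / r d)))) μ := by
    apply Integrable.mono' (hr_int.const_mul (b * (1 - Real.log a)))
      hF_meas.aestronglyMeasurable
    apply Filter.Eventually.of_forall
    intro d
    have hrd := hr_pos d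
    have hbd := hbnd d
    have hlog := log_first_bound ha ha1 hb hbd.1 hbd.2
    have hx0 : 0 < p d / r d := lt_of_lt_of_le ha hbd.1
    rw [Real.norm_eq_abs, abs_mul, abs_mul, abs_of_pos hrd, abs_of_pos hx0]
    have h1 : 0 ≤ 1 - Real.log a := by
      have := Real.log_nonpos ha.le ha1; linarith
    calc r d * ((p d / r d) * |Real.log (2 * (p d / r d) / (1 + p d / r d))|)
        ≤ r d * (b * (1 - Real.log a)) := by
          apply mul_le_mul_of_nonneg_left _ hrd.le
          apply mul_le_mul hbd.2 hlog (abs_nonneg _) (by linarith)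
      _ = b * (1 - Real.log a) * r d := by ring
  have hG_int : Integrable (fun d => r d * Real.log (2 / (1 + p d / r d))) μ := by
    apply Integrable.mono' (hr_int.const_mul (1 + Real.log b))
      hG_meas.aestronglyMeasurable
    apply Filter.Eventually.of_forall
    intro d
    have hrd := hr_pos d
    have hbd := hbnd d
    have hlog := log_second_bound ha ha1 hb hbd.1 hbd.2
    rw [Real.norm_eq_abs, abs_mul, abs_of_pos hrd]
    calc r d * |Real.log (2 / (1 + p d / r d))| ≤ r d * (1 + Real.log b) :=
          mul_le_mul_of_nonneg_left hlog hrd.le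
      _ = (1 + Real.log b) * r d := by ring
  -- put it together
  unfold JSdiv
  have e1 : ∫ d, p d * Real.log (p d / ((p d + r d) / 2)) ∂μ
      = ∫ d, r d * ((p d / r d) * Real.log (2 * (p d / r d) / (1 + p d / r d))) ∂μ := by
    apply integral_congr_ae
    exact Filter.Eventually.of_forall hA
  have e2 : ∫ d, r d * Real.log (r d / ((p d + r d) / 2)) ∂μ
      = ∫ d, r d * Real.log (2 / (1 + p d / r d)) ∂μ := by
    apply integral_congr_ae
    exact Filter.Eventually.of_forall hB
  rw [e1, e2]
  have e4 : ∫ d, r d * psi (p d / r d) ∂μ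
      = (1/2) * ∫ d, (r d * ((p d / r d) * Real.log (2 * (p d / r d) / (1 + p d / r d)))
          + r d * Real.log (2 / (1 + p d / r d))) ∂μ := by
    rw [← integral_const_mul]
    apply integral_congr_ae
    apply Filter.Eventually.of_forall
    intro d
    unfold psi
    ring
  rw [e4, integral_add hF_int hG_int]
  ring


lemma rpow_two' (y : ℝ) : y ^ (2:ℝ) = y ^ 2 := by
  rw [show (2:ℝ) = ((2:ℕ):ℝ) by norm_num, Real.rpow_natCast]

set_option maxHeartbeats 1000000 in
lemma client_bound {D W : Type*} [MeasurableSpace D] [MeasurableSpace W]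
    (μ : Measure D)
    (f : D → W → ℝ) (hf_meas : Measurable fun x : D × W => f x.1 x.2)
    (hf_pos : ∀ d w, 0 < f d w)
    (r : D → ℝ) (hr_meas : Measurable r) (hr_pos : ∀ d, 0 < r d)
    (hr_dens : ∫ d, r d ∂μ = 1)
    (P Q : Measure W) [IsProbabilityMeasure P] [IsProbabilityMeasure Q]
    (ξ : ℝ) (hξ : 0 ≤ ξ) (hBP : ∀ d w, |Real.log (f d w / r d)| ≤ ξ) :
    Real.sqrt (JSdiv μ (fun d => ∫ w, f d w ∂P) r)
      ≤ Real.sqrt (JSdiv μ (fun d => ∫ w, f d w ∂Q) r)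
        + (Real.exp (2 * ξ) - 1) / 2 * TV P Q := by
  set a := Real.exp (-ξ) with ha_def
  set b := Real.exp ξ with hb_def
  have ha : 0 < a := Real.exp_pos _
  have ha1 : a ≤ 1 := Real.exp_le_one_iff.2 (by linarith)
  have hb1 : 1 ≤ b := by
    rw [← Real.exp_zero]
    exact Real.exp_le_exp.2 hξ
  have hb0 : 0 < b := by linarith
  have hab : a * b = 1 := by rw [ha_def, hb_def, ← Real.exp_add]; simp
  have hbb : b * b = Real.exp (2 * ξ) := by rw [hb_def, ← Real.exp_add]; ring_nf
  set c := b / 2 with hc_def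
  have hc0 : 0 < c := by positivity
  have hcc : 1 / (2 * (a * (1 + a))) ≤ 2 * c ^ 2 := by
    rw [div_le_iff₀ (by positivity)]
    have h1 : 2 * c ^ 2 * (2 * (a * (1 + a))) = (a * b) * (b * (1 + a)) := by
      rw [hc_def]; ring
    rw [h1, hab, one_mul]
    nlinarith
  have hT0 : 0 ≤ TV P Q := TV_nonneg P Q
  -- bounds on f
  have hfw_meas : ∀ d, Measurable fun w => f d w :=
    fun d => hf_meas.comp measurable_prodMk_left
  have hfb : ∀ d w, r d * a ≤ f d w ∧ f d w ≤ r d * b := by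
    intro d w
    have hrd := hr_pos d
    have hfd := hf_pos d w
    have h := abs_le.1 (hBP d w)
    constructor
    · have := (Real.le_log_iff_exp_le (by positivity : 0 < f d w / r d)).1 h.1
      rw [← ha_def] at this
      rw [le_div_iff₀ hrd] at this
      linarith
    · have := (Real.log_le_iff_le_exp (by positivity : 0 < f d w / r d)).1 h.2
      rw [← hb_def] at this
      rw [div_le_iff₀ hrd] at this
      linarith
  have hint : ∀ d (R : Measure W) [IsProbabilityMeasure R], Integrable (fun w => f d w) R := by
    intro d R _
    apply Integrable.mono' (integrable_const (r d * b)) (hfw_meas d).aestronglyMeasurable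
    apply Filter.Eventually.of_forall
    intro w
    rw [Real.norm_eq_abs, abs_of_pos (hf_pos d w)]
    exact (hfb d w).2
  set p := fun d => ∫ w, f d w ∂P with hp_def
  set q := fun d => ∫ w, f d w ∂Q with hq_def
  have hp_meas : Measurable p := (hf_meas.stronglyMeasurable.integral_prod_right' (ν := P)).measurable
  have hq_meas : Measurable q := (hf_meas.stronglyMeasurable.integral_prod_right' (ν := Q)).measurable
  have hbounds : ∀ (ν : Measure W) [IsProbabilityMeasure ν], ∀ d,
      r d * a ≤ ∫ w, f d w ∂ν ∧ (∫ w, f d w ∂ν) ≤ r d * b := by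
    intro ν _ d
    constructor
    · calc r d * a = ∫ _, r d * a ∂ν := by simp
        _ ≤ ∫ w, f d w ∂ν := integral_mono (integrable_const _) (hint d ν)
            (fun w => (hfb d w).1)
    · calc (∫ w, f d w ∂ν) ≤ ∫ _, r d * b ∂ν := integral_mono (hint d ν)
            (integrable_const _) (fun w => (hfb d w).2)
        _ = r d * b := by simp
  have hpl : ∀ d, r d * a ≤ p d := fun d => (hbounds P d).1
  have hpu : ∀ d, p d ≤ r d * b := fun d => (hbounds P d).2
  have hql : ∀ d, r d * a ≤ q d := fun d => (hbounds Q d).1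
  have hqu : ∀ d, q d ≤ r d * b := fun d => (hbounds Q d).2
  have hr_int : Integrable r μ := by
    by_contra hcon
    rw [integral_undef hcon] at hr_dens
    norm_num at hr_dens
  -- difference bound
  have hdiff : ∀ d, |p d - q d| ≤ r d * (b - a) * TV P Q := by
    intro d
    have hrd := hr_pos d
    have hg_meas : Measurable fun w => f d w - r d * a := (hfw_meas d).sub measurable_const
    have hg0 : ∀ w, 0 ≤ f d w - r d * a := fun w => by linarith [(hfb d w).1]
    have hgM : ∀ w, f d w - r d * a ≤ r d * (b - a) := fun w => by
      have := (hfb d w).2; ring_nf; nlinarith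
    have habs := abs_integral_sub_le_TV P Q hg_meas hg0 hgM
    have heP : ∫ w, (f d w - r d * a) ∂P = p d - r d * a := by
      rw [integral_sub (hint d P) (integrable_const _)]
      simp [hp_def]
    have heQ : ∫ w, (f d w - r d * a) ∂Q = q d - r d * a := by
      rw [integral_sub (hint d Q) (integrable_const _)]
      simp [hq_def]
    rw [heP, heQ] at habs
    calc |p d - q d| = |p d - r d * a - (q d - r d * a)| := by ring_nf
      _ ≤ r d * (b - a) * TV P Q := habs
  -- normalized densities
  set xp := fun d => p d / r d with hxp_def
  set xq := fun d => q d / r d with hxq_def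
  have hxp_b : ∀ d, a ≤ xp d ∧ xp d ≤ b := by
    intro d
    have hrd := hr_pos d
    constructor
    · rw [hxp_def, le_div_iff₀ hrd]; nlinarith [hpl d]
    · rw [hxp_def, div_le_iff₀ hrd]; nlinarith [hpu d]
  have hxq_b : ∀ d, a ≤ xq d ∧ xq d ≤ b := by
    intro d
    have hrd := hr_pos d
    constructor
    · rw [hxq_def, le_div_iff₀ hrd]; nlinarith [hql d]
    · rw [hxq_def, div_le_iff₀ hrd]; nlinarith [hqu d]
  have hxdiff : ∀ d, |xp d - xq d| ≤ (b - a) * TV P Q := by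
    intro d
    have hrd := hr_pos d
    rw [hxp_def, hxq_def, div_sub_div_same, abs_div, abs_of_pos hrd, div_le_iff₀ hrd]
    calc |p d - q d| ≤ r d * (b - a) * TV P Q := hdiff d
      _ = (b - a) * TV P Q * r d := by ring
  set s := (Real.exp (2 * ξ) - 1) / 2 * TV P Q with hs_def
  have hcs : c * ((b - a) * TV P Q) = s := by
    rw [hs_def, hc_def, ← hbb]
    have : b / 2 * ((b - a) * TV P Q) = (b * b - a * b) / 2 * TV P Q := by ring
    rw [this, hab]
  have hs0 : 0 ≤ s := by
    rw [← hcs]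
    have hba : 0 ≤ b - a := by linarith
    exact mul_nonneg hc0.le (mul_nonneg hba hT0)
  -- pointwise sqrt-psi bound
  have hpoint : ∀ d, Real.sqrt (psi (xp d)) ≤ Real.sqrt (psi (xq d)) + s := by
    intro d
    have h1 := sqrt_psi_lip ha ha1 hc0 hcc (hxp_b d).1 (hxq_b d).1
    have h2 : c * |xp d - xq d| ≤ s := by
      rw [← hcs]
      exact mul_le_mul_of_nonneg_left (hxdiff d) hc0.le
    linarith
  -- JS rewrites
  have hJp : JSdiv μ p r = ∫ d, r d * psi (xp d) ∂μ :=
    JSdiv_eq_psi μ p r hp_meas hr_meas hr_pos hr_int ha ha1 hb1 hpl hpu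
  have hJq : JSdiv μ q r = ∫ d, r d * psi (xq d) ∂μ :=
    JSdiv_eq_psi μ q r hq_meas hr_meas hr_pos hr_int ha ha1 hb1 hql hqu
  -- measurability of psi-compositions
  have hxp_meas : Measurable xp := hp_meas.div hr_meas
  have hxq_meas : Measurable xq := hq_meas.div hr_meas
  have hpsi_meas : ∀ (x : D → ℝ), Measurable x → Measurable fun d => psi (x d) := by
    intro x hx
    have : (fun d => psi (x d)) = fun d =>
        (x d * Real.log (2 * x d / (1 + x d)) + Real.log (2 / (1 + x d))) / 2 := rfl
    rw [this]
    apply Measurable.div_const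
    apply Measurable.add
    · exact hx.mul (((hx.const_mul 2).div (hx.const_add 1)).log)
    · exact (measurable_const.div (hx.const_add 1)).log
  have hpsip_meas := hpsi_meas xp hxp_meas
  have hpsiq_meas := hpsi_meas xq hxq_meas
  -- uniform bounds on psi
  set κ := c * b with hκ_def
  have hκ0 : 0 < κ := by positivity
  have hsqrt_le : ∀ (x : D → ℝ), (∀ d, a ≤ x d ∧ x d ≤ b) →
      ∀ d, Real.sqrt (psi (x d)) ≤ κ := by
    intro x hx d
    have h1 := sqrt_psi_le ha ha1 hc0 hcc (hx d).1
    have h2 : |x d - 1| ≤ b := by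
      rw [abs_le]
      constructor
      · have := (hx d).1; linarith
      · have := (hx d).2; linarith
    calc Real.sqrt (psi (x d)) ≤ c * |x d - 1| := h1
      _ ≤ c * b := mul_le_mul_of_nonneg_left h2 hc0.le
  have hpsi_le : ∀ (x : D → ℝ), (∀ d, a ≤ x d ∧ x d ≤ b) → ∀ d, psi (x d) ≤ κ ^ 2 := by
    intro x hx d
    have h0 : 0 < x d := lt_of_lt_of_le ha (hx d).1
    have h1 := hsqrt_le x hx d
    have h2 := Real.sq_sqrt (psi_nonneg h0)
    nlinarith [Real.sqrt_nonneg (psi (x d))]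
  have hpsi_nn : ∀ (x : D → ℝ), (∀ d, a ≤ x d ∧ x d ≤ b) → ∀ d, 0 ≤ psi (x d) :=
    fun x hx d => psi_nonneg (lt_of_lt_of_le ha (hx d).1)
  -- integrability battery
  have I1 : Integrable (fun d => r d * psi (xq d)) μ := by
    apply Integrable.mono' (hr_int.const_mul (κ ^ 2)) (show Measurable fun d => r d * psi (xq d) from hr_meas.mul hpsiq_meas).aestronglyMeasurable
    apply Filter.Eventually.of_forall
    intro d
    rw [Real.norm_eq_abs, abs_mul, abs_of_pos (hr_pos d), abs_of_nonneg (hpsi_nn xq hxq_b d)]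
    calc r d * psi (xq d) ≤ r d * κ ^ 2 :=
          mul_le_mul_of_nonneg_left (hpsi_le xq hxq_b d) (hr_pos d).le
      _ = κ ^ 2 * r d := by ring
  have I3 : Integrable (fun d => r d * psi (xp d)) μ := by
    apply Integrable.mono' (hr_int.const_mul (κ ^ 2)) (show Measurable fun d => r d * psi (xp d) from hr_meas.mul hpsip_meas).aestronglyMeasurable
    apply Filter.Eventually.of_forall
    intro d
    rw [Real.norm_eq_abs, abs_mul, abs_of_pos (hr_pos d), abs_of_nonneg (hpsi_nn xp hxp_b d)]
    calc r d * psi (xp d) ≤ r d * κ ^ 2 :=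
          mul_le_mul_of_nonneg_left (hpsi_le xp hxp_b d) (hr_pos d).le
      _ = κ ^ 2 * r d := by ring
  have hsqq_meas : Measurable fun d => Real.sqrt (psi (xq d)) := hpsiq_meas.sqrt
  have I2 : Integrable (fun d => r d * Real.sqrt (psi (xq d))) μ := by
    apply Integrable.mono' (hr_int.const_mul κ) (show Measurable fun d => r d * Real.sqrt (psi (xq d)) from hr_meas.mul hsqq_meas).aestronglyMeasurable
    apply Filter.Eventually.of_forall
    intro d
    rw [Real.norm_eq_abs, abs_mul, abs_of_pos (hr_pos d), abs_of_nonneg (Real.sqrt_nonneg _)]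
    calc r d * Real.sqrt (psi (xq d)) ≤ r d * κ :=
          mul_le_mul_of_nonneg_left (hsqrt_le xq hxq_b d) (hr_pos d).le
      _ = κ * r d := by ring
  have I4 : Integrable (fun d => r d * (Real.sqrt (psi (xq d)) + s) ^ 2) μ := by
    apply Integrable.mono' (hr_int.const_mul ((κ + s) ^ 2))
      (show Measurable fun d => r d * (Real.sqrt (psi (xq d)) + s) ^ 2 from
        hr_meas.mul ((hsqq_meas.add_const s).pow measurable_const)).aestronglyMeasurable
    apply Filter.Eventually.of_forall
    intro d
    have h1 : 0 ≤ Real.sqrt (psi (xq d)) + s := by positivity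
    rw [Real.norm_eq_abs, abs_mul, abs_of_pos (hr_pos d), abs_of_nonneg (by positivity)]
    have h2 : (Real.sqrt (psi (xq d)) + s) ^ 2 ≤ (κ + s) ^ 2 := by
      apply pow_le_pow_left₀ h1
      linarith [hsqrt_le xq hxq_b d]
    calc r d * (Real.sqrt (psi (xq d)) + s) ^ 2 ≤ r d * (κ + s) ^ 2 :=
          mul_le_mul_of_nonneg_left h2 (hr_pos d).le
      _ = (κ + s) ^ 2 * r d := by ring
  -- step 1: JS_p ≤ ∫ r (√ψ_q + s)²
  have step1 : JSdiv μ p r ≤ ∫ d, r d * (Real.sqrt (psi (xq d)) + s) ^ 2 ∂μ := by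
    rw [hJp]
    apply integral_mono I3 I4
    intro d
    have h0 : 0 < xp d := lt_of_lt_of_le ha (hxp_b d).1
    have h1 : psi (xp d) = Real.sqrt (psi (xp d)) ^ 2 := (Real.sq_sqrt (psi_nonneg h0)).symm
    apply mul_le_mul_of_nonneg_left _ (hr_pos d).le
    rw [h1]
    apply pow_le_pow_left₀ (Real.sqrt_nonneg _) (hpoint d)
  -- step 2: expand the square
  have step2 : ∫ d, r d * (Real.sqrt (psi (xq d)) + s) ^ 2 ∂μ
      = (∫ d, r d * psi (xq d) ∂μ) + (2 * s) * (∫ d, r d * Real.sqrt (psi (xq d)) ∂μ)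
        + s ^ 2 := by
    have e : (fun d => r d * (Real.sqrt (psi (xq d)) + s) ^ 2)
        = fun d => (r d * psi (xq d) + (2 * s) * (r d * Real.sqrt (psi (xq d))))
          + s ^ 2 * r d := by
      funext d
      have h0 : 0 < xq d := lt_of_lt_of_le ha (hxq_b d).1
      have h2 : Real.sqrt (psi (xq d)) ^ 2 = psi (xq d) := Real.sq_sqrt (psi_nonneg h0)
      linear_combination r d * h2
    have i12 : Integrable (fun d => r d * psi (xq d)
        + (2 * s) * (r d * Real.sqrt (psi (xq d)))) μ := I1.add (I2.const_mul (2 * s))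
    have i3 : Integrable (fun d => s ^ 2 * r d) μ := hr_int.const_mul (s ^ 2)
    have i2' : Integrable (fun d => (2 * s) * (r d * Real.sqrt (psi (xq d)))) μ :=
      I2.const_mul (2 * s)
    rw [e, integral_add i12 i3, integral_add I1 i2', integral_const_mul, integral_const_mul,
      hr_dens]
    ring
  -- step 3: Cauchy–Schwarz
  have step3 : ∫ d, r d * Real.sqrt (psi (xq d)) ∂μ
      ≤ Real.sqrt (∫ d, r d * psi (xq d) ∂μ) := by
    have hpq : Real.HolderConjugate 2 2 := Real.holderConjugate_iff.mpr ⟨by norm_num, by norm_num⟩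
    have hof2 : ENNReal.ofReal (2:ℝ) = 2 := by norm_num
    have hf2 : MemLp (fun d => Real.sqrt (r d)) (ENNReal.ofReal (2:ℝ)) μ := by
      rw [hof2, memLp_two_iff_integrable_sq hr_meas.sqrt.aestronglyMeasurable]
      have : (fun d => Real.sqrt (r d) ^ 2) = r := by
        funext d
        exact Real.sq_sqrt (hr_pos d).le
      rw [this]
      exact hr_int
    have hg2 : MemLp (fun d => Real.sqrt (r d) * Real.sqrt (psi (xq d)))
        (ENNReal.ofReal (2:ℝ)) μ := by
      rw [hof2, memLp_two_iff_integrable_sq (show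
        Measurable fun d => Real.sqrt (r d) * Real.sqrt (psi (xq d)) from hr_meas.sqrt.mul hsqq_meas).aestronglyMeasurable]
      have : (fun d => (Real.sqrt (r d) * Real.sqrt (psi (xq d))) ^ 2)
          = fun d => r d * psi (xq d) := by
        funext d
        have h0 : 0 < xq d := lt_of_lt_of_le ha (hxq_b d).1
        rw [mul_pow, Real.sq_sqrt (hr_pos d).le, Real.sq_sqrt (psi_nonneg h0)]
      rw [this]
      exact I1
    have hCS := integral_mul_le_Lp_mul_Lq_of_nonneg hpq
      (Filter.Eventually.of_forall (fun d => Real.sqrt_nonneg (r d)))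
      (Filter.Eventually.of_forall (fun d => by positivity)) hf2 hg2
    have e1 : ∫ d, Real.sqrt (r d) * (Real.sqrt (r d) * Real.sqrt (psi (xq d))) ∂μ
        = ∫ d, r d * Real.sqrt (psi (xq d)) ∂μ := by
      apply integral_congr_ae
      apply Filter.Eventually.of_forall
      intro d
      show Real.sqrt (r d) * (Real.sqrt (r d) * Real.sqrt (psi (xq d)))
        = r d * Real.sqrt (psi (xq d))
      rw [← mul_assoc, Real.mul_self_sqrt (hr_pos d).le]
    have e2 : ∫ d, Real.sqrt (r d) ^ (2:ℝ) ∂μ = 1 := by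
      rw [show (fun d => Real.sqrt (r d) ^ (2:ℝ)) = r from ?_]
      · exact hr_dens
      · funext d
        rw [rpow_two', Real.sq_sqrt (hr_pos d).le]
    have e3 : ∫ d, (Real.sqrt (r d) * Real.sqrt (psi (xq d))) ^ (2:ℝ) ∂μ
        = ∫ d, r d * psi (xq d) ∂μ := by
      apply integral_congr_ae
      apply Filter.Eventually.of_forall
      intro d
      have h0 : 0 < xq d := lt_of_lt_of_le ha (hxq_b d).1
      show (Real.sqrt (r d) * Real.sqrt (psi (xq d))) ^ (2:ℝ) = r d * psi (xq d)
      rw [rpow_two', mul_pow, Real.sq_sqrt (hr_pos d).le, Real.sq_sqrt (psi_nonneg h0)]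
    rw [e1, e2, e3] at hCS
    calc ∫ d, r d * Real.sqrt (psi (xq d)) ∂μ
        ≤ (1:ℝ) ^ (1/(2:ℝ)) * (∫ d, r d * psi (xq d) ∂μ) ^ (1/(2:ℝ)) := hCS
      _ = Real.sqrt (∫ d, r d * psi (xq d) ∂μ) := by
          rw [Real.one_rpow, one_mul, ← Real.sqrt_eq_rpow]
  -- combine
  set Jq := ∫ d, r d * psi (xq d) ∂μ with hJq_def
  have hJq0 : 0 ≤ Jq := integral_nonneg (fun d => by
    have h0 : 0 < xq d := lt_of_lt_of_le ha (hxq_b d).1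
    exact mul_nonneg (hr_pos d).le (psi_nonneg h0))
  have hkey : JSdiv μ p r ≤ (Real.sqrt Jq + s) ^ 2 := by
    have h1 : JSdiv μ p r ≤ Jq + (2 * s) * Real.sqrt Jq + s ^ 2 := by
      have h2 := mul_le_mul_of_nonneg_left step3 (by linarith : (0:ℝ) ≤ 2 * s)
      rw [step2] at step1
      linarith
    have h3 : Real.sqrt Jq ^ 2 = Jq := Real.sq_sqrt hJq0
    calc JSdiv μ p r ≤ Jq + (2 * s) * Real.sqrt Jq + s ^ 2 := h1
      _ = (Real.sqrt Jq + s) ^ 2 := by linear_combination -h3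
  have hsq : Real.sqrt (JSdiv μ p r) ≤ Real.sqrt Jq + s := by
    calc Real.sqrt (JSdiv μ p r) ≤ Real.sqrt ((Real.sqrt Jq + s) ^ 2) :=
          Real.sqrt_le_sqrt hkey
      _ = Real.sqrt Jq + s := Real.sqrt_sq (by positivity)
  rw [hJq]
  exact hsq

end Client

end AuxNFL

/-- No free lunch theorem (NFL) for security and utility in federated learning:
`C_1 ≤ ε_p + C_2·ε_u`, where `C_1 = (1/K)·Σ_k √JS(f^O_k ‖ f_{B,k})`,
`ε_p = (1/K)·Σ_k √JS(f^A_k ‖ f_{B,k})` is the average Bayesian privacy leakage,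
`ε_u = ∫ U_a dP^O_a − ∫ U_a dP^S_a` is the utility loss, and
`C_2 = γ·(e^{2ξ} − 1)/Δ` with `γ = ((1/K)·Σ_k TV(P^O_k ‖ P^S_k)) / TV(P^O_a ‖ P^S_a)`. -/
theorem no_free_lunch_security_utility
    (K : ℕ) (hK : 0 < K)
    (D : Fin K → Type*) [∀ k, MeasurableSpace (D k)]
    (μd : ∀ k, Measure (D k)) [∀ k, SigmaFinite (μd k)]
    (W : Fin K → Type*) [∀ k, MeasurableSpace (W k)]
    (f : ∀ k, D k → W k → ℝ)
    (hf_meas : ∀ k, Measurable fun p : D k × W k => f k p.1 p.2)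
    (hf_pos : ∀ k d w, 0 < f k d w)
    (hf_dens : ∀ k w, ∫ d, f k d w ∂(μd k) = 1)
    (fB : ∀ k, D k → ℝ)
    (hfB_meas : ∀ k, Measurable (fB k))
    (hfB_pos : ∀ k d, 0 < fB k d)
    (hfB_dens : ∀ k, ∫ d, fB k d ∂(μd k) = 1)
    (PO PS : ∀ k, Measure (W k))
    [∀ k, IsProbabilityMeasure (PO k)] [∀ k, IsProbabilityMeasure (PS k)]
    (ξ : ℝ) (hξ : 0 ≤ ξ)
    (hBP : ∀ k d w, |Real.log (f k d w / fB k d)| ≤ ξ)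
    -- aggregated model
    (Wa : Type*) [MeasurableSpace Wa]
    (POa PSa : Measure Wa) [IsProbabilityMeasure POa] [IsProbabilityMeasure PSa]
    (U : Fin K → Wa → ℝ)
    (hU_meas : ∀ k, Measurable (U k))
    (hU_nonneg : ∀ k w, 0 ≤ U k w)
    (Ua : Wa → ℝ)
    (hUa : Ua = fun w => (1 / (K : ℝ)) * ∑ k, U k w)
    -- `suppO` and `suppS` are the supports of `P^O_a` and `P^S_a`: measurable sets of
    -- full measure for the respective distributions.
    (suppO suppS : Set Wa)
    (hsuppO_meas : MeasurableSet suppO) (hsuppS_meas : MeasurableSet suppS)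
    (hsuppO_full : POa suppOᶜ = 0) (hsuppS_full : PSa suppSᶜ = 0)
    -- (i) positivity of the aggregated total variation
    (hTV_pos : 0 < TV POa PSa)
    -- (ii) `Wstar` is the nonempty set of maximizers of `U_a` over the union of the
    -- supports, and the support of `P^O_a` consists of maximizers (convergence)
    (Wstar : Set Wa)
    (hWstar : Wstar = {w ∈ suppO ∪ suppS | ∀ v ∈ suppO ∪ suppS, Ua v ≤ Ua w})
    (hWstar_ne : Wstar.Nonempty)
    (hconv : suppO ⊆ Wstar)
    -- (iii) Assumption 4.1
    (Δ : ℝ) (hΔ : 0 < Δ)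
    (hassump : (PSa {w ∈ suppS | ∀ ws ∈ Wstar, Ua ws - Ua w ≤ Δ}).toReal
        ≤ TV POa PSa / 2) :
    (1 / (K : ℝ)) * ∑ k, Real.sqrt (JSdiv (μd k) (fun d => ∫ w, f k d w ∂(PO k)) (fB k))
      ≤ (1 / (K : ℝ)) * ∑ k, Real.sqrt (JSdiv (μd k) (fun d => ∫ w, f k d w ∂(PS k)) (fB k))
        + (((1 / (K : ℝ)) * ∑ k, TV (PO k) (PS k)) / TV POa PSa) * (Real.exp (2 * ξ) - 1) / Δ
          * ((∫ w, Ua w ∂POa) - ∫ w, Ua w ∂PSa) := by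
  have hK0 : (0:ℝ) < (K:ℝ) := by exact_mod_cast hK
  have hE0 : 0 ≤ Real.exp (2 * ξ) - 1 := by
    have : (1:ℝ) ≤ Real.exp (2 * ξ) := by
      rw [← Real.exp_zero]
      exact Real.exp_le_exp.2 (by linarith)
    linarith
  -- measurability and nonnegativity of Ua
  have hUam : Measurable Ua := by
    rw [hUa]
    exact (Finset.measurable_sum Finset.univ (fun k _ => hU_meas k)).const_mul _
  have hUa0 : ∀ w, 0 ≤ Ua w := by
    intro w
    rw [hUa]
    exact mul_nonneg (by positivity) (Finset.sum_nonneg (fun k _ => hU_nonneg k w))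
  obtain ⟨ws, hws⟩ := hWstar_ne
  have hws' := hws
  rw [hWstar] at hws'
  set Ustar := Ua ws with hUstar_def
  have hU_le : ∀ w ∈ suppO ∪ suppS, Ua w ≤ Ustar := fun w hw => hws'.2 w hw
  have hWval : ∀ w ∈ Wstar, Ua w = Ustar := by
    intro w hw
    rw [hWstar] at hw
    exact le_antisymm (hU_le w hw.1) (hw.2 ws hws'.1)
  have hUstar0 : 0 ≤ Ustar := hUa0 ws
  -- integral over POa equals Ustar
  have haeO : ∀ᵐ w ∂POa, w ∈ suppO := by
    rw [ae_iff]
    simpa [Set.compl_def] using hsuppO_full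
  have haeS : ∀ᵐ w ∂PSa, w ∈ suppS := by
    rw [ae_iff]
    simpa [Set.compl_def] using hsuppS_full
  have hPOint : ∫ w, Ua w ∂POa = Ustar := by
    have : Ua =ᵐ[POa] fun _ => Ustar := by
      filter_upwards [haeO] with w hw
      exact hWval w (hconv hw)
    rw [integral_congr_ae this]
    simp
  -- the "good" set
  set G := {w ∈ suppS | ∀ ws ∈ Wstar, Ua ws - Ua w ≤ Δ} with hG_def
  have hG_eq : G = suppS ∩ Ua ⁻¹' (Set.Ici (Ustar - Δ)) := by
    rw [hG_def]
    ext w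
    simp only [Set.mem_setOf_eq, Set.mem_inter_iff, Set.mem_preimage, Set.mem_Ici]
    constructor
    · rintro ⟨h1, h2⟩
      refine ⟨h1, ?_⟩
      have := h2 ws hws
      linarith
    · rintro ⟨h1, h2⟩
      refine ⟨h1, fun ws' hws' => ?_⟩
      rw [hWval ws' hws']
      linarith
  have hG_meas : MeasurableSet G := by
    rw [hG_eq]
    exact hsuppS_meas.inter (hUam measurableSet_Ici)
  -- integrability of Ua wrt PSa
  have hInt : Integrable Ua PSa := by
    apply Integrable.mono' (integrable_const Ustar) hUam.aestronglyMeasurable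
    filter_upwards [haeS] with w hw
    rw [Real.norm_eq_abs, abs_of_nonneg (hUa0 w)]
    exact hU_le w (Set.mem_union_right _ hw)
  set g := (PSa G).toReal with hg_def
  have hg0 : 0 ≤ g := ENNReal.toReal_nonneg
  have hg_le : g ≤ TV POa PSa / 2 := hassump
  -- split the integral
  have hsplit : ∫ w, Ua w ∂PSa = (∫ w in G, Ua w ∂PSa) + ∫ w in Gᶜ, Ua w ∂PSa :=
    (integral_add_compl hG_meas hInt).symm
  have hbound1 : ∫ w in G, Ua w ∂PSa ≤ Ustar * g := by
    have h := setIntegral_mono_on hInt.integrableOn (integrableOn_const (C := Ustar)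
      (measure_ne_top PSa G)) hG_meas (fun w hw => by
        rw [hG_eq] at hw
        exact hU_le w (Set.mem_union_right _ hw.1))
    rw [setIntegral_const] at h
    calc ∫ w in G, Ua w ∂PSa ≤ (PSa G).toReal • Ustar := h
      _ = Ustar * g := by rw [smul_eq_mul, hg_def]; ring
  have hbound2 : ∫ w in Gᶜ, Ua w ∂PSa ≤ (Ustar - Δ) * (1 - g) := by
    have hae : ∀ᵐ w ∂(PSa.restrict Gᶜ), Ua w ≤ Ustar - Δ := by
      rw [ae_restrict_iff' hG_meas.compl]
      filter_upwards [haeS] with w hw hwc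
      have : ¬(w ∈ suppS ∧ ∀ ws ∈ Wstar, Ua ws - Ua w ≤ Δ) := hwc
      push_neg at this
      obtain ⟨ws', hws'mem, hws'gt⟩ := this hw
      rw [hWval ws' hws'mem] at hws'gt
      linarith
    have h := integral_mono_ae hInt.restrict (integrable_const _) hae
    rw [integral_const] at h
    have hcompl : ((PSa.restrict Gᶜ) Set.univ).toReal = 1 - g := by
      rw [Measure.restrict_apply_univ]
      rw [hg_def, prob_compl_eq_one_sub hG_meas]
      rw [ENNReal.toReal_sub_of_le prob_le_one (by simp)]
      simp
    rw [measureReal_def, hcompl] at h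
    calc ∫ w in Gᶜ, Ua w ∂PSa ≤ (1 - g) • (Ustar - Δ) := h
      _ = (Ustar - Δ) * (1 - g) := by rw [smul_eq_mul]; ring
  -- utility loss lower bound
  have hT1 : TV POa PSa ≤ 1 := TV_le_one POa PSa
  have hεu : Δ * TV POa PSa / 2 ≤ (∫ w, Ua w ∂POa) - ∫ w, Ua w ∂PSa := by
    rw [hPOint]
    have h1 : ∫ w, Ua w ∂PSa ≤ Ustar - Δ * (1 - g) := by
      rw [hsplit]
      have := add_le_add hbound1 hbound2
      calc (∫ w in G, Ua w ∂PSa) + ∫ w in Gᶜ, Ua w ∂PSa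
          ≤ Ustar * g + (Ustar - Δ) * (1 - g) := this
        _ = Ustar - Δ * (1 - g) := by ring
    have h2 : 1 - g ≥ TV POa PSa / 2 := by linarith
    nlinarith
  -- per-client bounds
  have hclient : ∀ k, Real.sqrt (JSdiv (μd k) (fun d => ∫ w, f k d w ∂(PO k)) (fB k))
      ≤ Real.sqrt (JSdiv (μd k) (fun d => ∫ w, f k d w ∂(PS k)) (fB k))
        + (Real.exp (2 * ξ) - 1) / 2 * TV (PO k) (PS k) := by
    intro k
    exact client_bound (μd k) (f k) (hf_meas k) (hf_pos k) (fB k) (hfB_meas k)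
      (hfB_pos k) (hfB_dens k) (PO k) (PS k) ξ hξ (hBP k)
  -- sum up
  have hsum : ∑ k, Real.sqrt (JSdiv (μd k) (fun d => ∫ w, f k d w ∂(PO k)) (fB k))
      ≤ (∑ k, Real.sqrt (JSdiv (μd k) (fun d => ∫ w, f k d w ∂(PS k)) (fB k)))
        + (Real.exp (2 * ξ) - 1) / 2 * ∑ k, TV (PO k) (PS k) := by
    calc ∑ k, Real.sqrt (JSdiv (μd k) (fun d => ∫ w, f k d w ∂(PO k)) (fB k))
        ≤ ∑ k, (Real.sqrt (JSdiv (μd k) (fun d => ∫ w, f k d w ∂(PS k)) (fB k))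
            + (Real.exp (2 * ξ) - 1) / 2 * TV (PO k) (PS k)) :=
          Finset.sum_le_sum (fun k _ => hclient k)
      _ = (∑ k, Real.sqrt (JSdiv (μd k) (fun d => ∫ w, f k d w ∂(PS k)) (fB k)))
          + (Real.exp (2 * ξ) - 1) / 2 * ∑ k, TV (PO k) (PS k) := by
          rw [Finset.sum_add_distrib, Finset.mul_sum]
  set S := (1 / (K : ℝ)) * ∑ k, TV (PO k) (PS k) with hS_def
  have hS0 : 0 ≤ S := by
    rw [hS_def]
    apply mul_nonneg (by positivity)
    exact Finset.sum_nonneg (fun k _ => TV_nonneg (PO k) (PS k))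
  have hfinal : (Real.exp (2 * ξ) - 1) / 2 * S
      ≤ (S / TV POa PSa) * (Real.exp (2 * ξ) - 1) / Δ
        * ((∫ w, Ua w ∂POa) - ∫ w, Ua w ∂PSa) := by
    have hcoef : 0 ≤ (S / TV POa PSa) * (Real.exp (2 * ξ) - 1) / Δ := by positivity
    calc (Real.exp (2 * ξ) - 1) / 2 * S
        = (S / TV POa PSa) * (Real.exp (2 * ξ) - 1) / Δ * (Δ * TV POa PSa / 2) := by
          field_simp
      _ ≤ (S / TV POa PSa) * (Real.exp (2 * ξ) - 1) / Δ
          * ((∫ w, Ua w ∂POa) - ∫ w, Ua w ∂PSa) :=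
          mul_le_mul_of_nonneg_left hεu hcoef
  have hmul := mul_le_mul_of_nonneg_left hsum (by positivity : (0:ℝ) ≤ 1 / (K:ℝ))
  calc (1 / (K : ℝ)) * ∑ k, Real.sqrt (JSdiv (μd k) (fun d => ∫ w, f k d w ∂(PO k)) (fB k))
      ≤ (1 / (K : ℝ)) * ((∑ k, Real.sqrt (JSdiv (μd k) (fun d => ∫ w, f k d w ∂(PS k)) (fB k)))
          + (Real.exp (2 * ξ) - 1) / 2 * ∑ k, TV (PO k) (PS k)) := hmul
    _ = (1 / (K : ℝ)) * (∑ k, Real.sqrt (JSdiv (μd k) (fun d => ∫ w, f k d w ∂(PS k)) (fB k)))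
          + (Real.exp (2 * ξ) - 1) / 2 * S := by
        rw [hS_def]
        ring
    _ ≤ (1 / (K : ℝ)) * (∑ k, Real.sqrt (JSdiv (μd k) (fun d => ∫ w, f k d w ∂(PS k)) (fB k)))
          + (S / TV POa PSa) * (Real.exp (2 * ξ) - 1) / Δ
            * ((∫ w, Ua w ∂POa) - ∫ w, Ua w ∂PSa) := by linarith
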